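/- arXiv:2409.01432 — 4 statements merged into one kernel-verified Lean document; each statement's English description precedes it below -/
import Mathlib

section
/- Let f₁ and f₂ be univariate exponential polynomials, each with at most N terms, pairwise distinct frequencies in [0,1), and nonzero polynomial coefficients of degree < D. If f₁(m) = f₂(m) for every integer m ∈ {0, 1, …, 2ND}, then f₁(ξ) = f₂(ξ) for all ξ ∈ ℝ (in particular they have the same frequencies and the same polynomial coefficients). -/
open Polynomial
noncomputable section ExpPolyAux






/-- The difference operator `u ↦ (m ↦ u (m+1) - w * u m)` on sequences. -/
def opA (w : ℂ) (u : ℕ → ℂ) : ℕ → ℂ := fun m => u (m + 1) - w * u m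

/-- Iterated difference operators. -/
def opsA (L : List ℂ) (u : ℕ → ℂ) : ℕ → ℂ := L.foldr opA u

@[simp] lemma opsA_nil (u : ℕ → ℂ) : opsA [] u = u := rfl
@[simp] lemma opsA_cons (w : ℂ) (L : List ℂ) (u : ℕ → ℂ) :
    opsA (w :: L) u = opA w (opsA L u) := rfl

lemma opsA_append (L₁ L₂ : List ℂ) (u : ℕ → ℂ) :
    opsA (L₁ ++ L₂) u = opsA L₁ (opsA L₂ u) := by
  simp [opsA, List.foldr_append]

lemma opA_zero (w : ℂ) : opA w (fun _ => 0) = fun _ => 0 := by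
  funext m; simp [opA]

lemma opsA_zero (L : List ℂ) : opsA L (fun _ => 0) = fun _ => 0 := by
  induction L with
  | nil => rfl
  | cons w L ih => simp [opsA_cons, ih, opA_zero]

lemma opsA_sum {ι : Type*} (L : List ℂ) (s : Finset ι) (F : ι → ℕ → ℂ) :
    opsA L (fun m => ∑ i ∈ s, F i m) = fun m => ∑ i ∈ s, opsA L (F i) m := by
  induction L with
  | nil => rfl
  | cons w L ih =>
    funext m
    simp only [opsA_cons, ih, opA, Finset.mul_sum, ← Finset.sum_sub_distrib]

/-- The shifted polynomial corresponding to applying `opA w` to `m ↦ q(m) z^m`. -/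
def shiftP (z w : ℂ) (q : Polynomial ℂ) : Polynomial ℂ :=
  z • (q.comp (X + C 1)) - w • q

lemma opA_poly (z w : ℂ) (q : Polynomial ℂ) :
    opA w (fun m => q.eval (m : ℂ) * z ^ m) =
      fun (m : ℕ) => (shiftP z w q).eval (m : ℂ) * z ^ m := by
  funext m
  simp only [opA, shiftP, eval_sub, eval_smul, eval_comp, eval_add, eval_X, eval_C,
    smul_eq_mul, pow_succ]
  push_cast
  ring


lemma natDegree_comp_add_one (q : Polynomial ℂ) :
    (q.comp (X + C 1)).natDegree = q.natDegree := by
  simp only [natDegree_comp, natDegree_X_add_C, mul_one]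

lemma leadingCoeff_comp_add_one (q : Polynomial ℂ) :
    (q.comp (X + C 1)).leadingCoeff = q.leadingCoeff := by
  rw [leadingCoeff_comp (by simp only [natDegree_X_add_C]; exact one_ne_zero)]
  simp only [leadingCoeff_X_add_C, one_pow, mul_one]

lemma comp_add_one_ne_zero {q : Polynomial ℂ} (hq : q ≠ 0) : q.comp (X + C 1) ≠ 0 := by
  intro h
  apply hq
  rw [← leadingCoeff_eq_zero, ← leadingCoeff_comp_add_one, h, leadingCoeff_zero]

lemma degree_comp_add_one (q : Polynomial ℂ) : (q.comp (X + C 1)).degree = q.degree := by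
  by_cases hq : q = 0
  · simp [hq]
  · rw [degree_eq_natDegree hq, degree_eq_natDegree (comp_add_one_ne_zero hq),
      natDegree_comp_add_one]

lemma degree_shiftP_le (z w : ℂ) (q : Polynomial ℂ) :
    (shiftP z w q).degree ≤ q.degree := by
  refine le_trans (degree_sub_le _ _) (max_le ?_ ?_)
  · exact le_trans (degree_smul_le _ _) (le_of_eq (degree_comp_add_one q))
  · exact degree_smul_le _ _

lemma degree_shiftP_self_lt (z : ℂ) {q : Polynomial ℂ} (hq : q ≠ 0) :
    (shiftP z z q).degree < q.degree := by
  have h : shiftP z z q = z • (q.comp (X + C 1) - q) := by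
    simp [shiftP, smul_sub]
  rw [h]
  refine lt_of_le_of_lt (degree_smul_le _ _) ?_
  have := degree_sub_lt (degree_comp_add_one q) (comp_add_one_ne_zero hq)
    (leadingCoeff_comp_add_one q)
  rwa [degree_comp_add_one q] at this

lemma shiftP_ne_zero {z w : ℂ} (hz : z ≠ 0) (hzw : z ≠ w) {q : Polynomial ℂ} (hq : q ≠ 0) :
    shiftP z w q ≠ 0 := by
  have hco : (shiftP z w q).coeff q.natDegree = (z - w) * q.leadingCoeff := by
    have h1 : (q.comp (X + C 1)).coeff q.natDegree = q.leadingCoeff := by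
      rw [← natDegree_comp_add_one q, ← leadingCoeff, leadingCoeff_comp_add_one]
    simp only [shiftP, coeff_sub, coeff_smul, smul_eq_mul, h1, coeff_natDegree]
    ring
  intro h
  rw [h, coeff_zero] at hco
  exact mul_ne_zero (sub_ne_zero.mpr hzw) (leadingCoeff_ne_zero.mpr hq) hco.symm

lemma shiftP_iter_ne_zero {z w : ℂ} (hz : z ≠ 0) (hzw : z ≠ w) (D : ℕ) {q : Polynomial ℂ}
    (hq : q ≠ 0) : (shiftP z w)^[D] q ≠ 0 := by
  induction D with
  | zero => simpa using hq
  | succ D ih =>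
    rw [Function.iterate_succ_apply']
    exact shiftP_ne_zero hz hzw ih

lemma degree_shiftP_iter_le (z w : ℂ) (D : ℕ) (q : Polynomial ℂ) :
    ((shiftP z w)^[D] q).degree ≤ q.degree := by
  induction D with
  | zero => simp
  | succ D ih =>
    rw [Function.iterate_succ_apply']
    exact le_trans (degree_shiftP_le _ _ _) ih

lemma shiftP_iter_self_eq_zero (z : ℂ) (D : ℕ) :
    ∀ q : Polynomial ℂ, q.degree < (D : WithBot ℕ) → (shiftP z z)^[D] q = 0 := by
  induction D with
  | zero =>
    intro q h
    have : q = 0 := by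
      rw [← degree_eq_bot]
      exact Nat.WithBot.lt_zero_iff.mp (by exact_mod_cast h)
    simpa using this
  | succ D ih =>
    intro q h
    rw [Function.iterate_succ_apply]
    apply ih
    by_cases hq : q = 0
    · simp [hq, shiftP]
    · refine lt_of_lt_of_le (degree_shiftP_self_lt z hq) ?_
      rw [degree_eq_natDegree hq]
      exact_mod_cast Nat.lt_succ_iff.mp
        ((natDegree_lt_iff_degree_lt hq).mpr (by exact_mod_cast h))
lemma opsA_exists_coeffs (L : List ℂ) :
    ∃ c : ℕ → ℂ, c L.length = 1 ∧ (∀ i, L.length < i → c i = 0) ∧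
      ∀ u m, opsA L u m = ∑ i ∈ Finset.range (L.length + 1), c i * u (m + i) := by
  induction L with
  | nil =>
    refine ⟨fun i => if i = 0 then 1 else 0, rfl, fun i hi => if_neg (by omega), ?_⟩
    intro u m; simp
  | cons w L ih =>
    obtain ⟨c, hc1, hc0, hform⟩ := ih
    refine ⟨fun i => (if i = 0 then 0 else c (i - 1)) - w * c i, ?_, ?_, ?_⟩
    · simp only [List.length_cons, Nat.add_sub_cancel, if_neg (Nat.succ_ne_zero _)]
      rw [hc1, hc0 (L.length + 1) (by omega), mul_zero, sub_zero]
    · intro i hi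
      simp only [List.length_cons] at hi
      simp only
      rw [if_neg (by omega), hc0 (i - 1) (by omega), hc0 i (by omega), mul_zero, sub_zero]
    · intro u m
      rw [opsA_cons]
      have key : ∀ k, opsA L u k = ∑ i ∈ Finset.range (L.length + 1), c i * u (k + i) := hform u
      simp only [opA, key, List.length_cons]
      symm
      simp only [sub_mul]
      rw [Finset.sum_sub_distrib]
      congr 1
      · -- ∑_{i ∈ range (len+2)} (if i = 0 then 0 else c (i-1)) * u (m+i) = ∑_{range(len+1)} c i * u (m+1+i)
        rw [Finset.sum_range_succ' (fun i => (if i = 0 then 0 else c (i - 1)) * u (m + i))]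
        simp only [if_neg (Nat.succ_ne_zero _), Nat.add_sub_cancel, if_pos rfl, zero_mul,
          add_zero]
        simp only [ite_true, zero_mul, add_zero]
        refine Finset.sum_congr rfl fun i _ => ?_
        congr 2
        omega
      · -- w * ∑ = ∑_{range(len+2)} w * c i * u(m+i)
        rw [Finset.sum_range_succ, hc0 (L.length + 1) (by omega), Finset.mul_sum]
        simp [mul_assoc]
  
lemma vanish_propagate (L : List ℂ) (U : ℕ → ℂ) (M : ℕ) (hlen : L.length ≤ M + 1)
    (hrec : ∀ m, opsA L U m = 0) (hinit : ∀ m, m ≤ M → U m = 0) : ∀ m, U m = 0 := by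
  obtain ⟨c, hc1, hc0, hform⟩ := opsA_exists_coeffs L
  intro m
  induction m using Nat.strong_induction_on with
  | _ m ih =>
    by_cases hm : m ≤ M
    · exact hinit m hm
    push_neg at hm
    have hl : L.length ≤ m := by omega
    have h0 := hrec (m - L.length)
    rw [hform, Finset.sum_range_succ] at h0
    have hz : ∀ i ∈ Finset.range L.length, c i * U (m - L.length + i) = 0 := by
      intro i hi
      rw [Finset.mem_range] at hi
      rw [ih (m - L.length + i) (by omega), mul_zero]
    rw [Finset.sum_eq_zero hz, hc1, Nat.sub_add_cancel hl, zero_add, one_mul] at h0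
    exact h0

lemma opsA_replicate (z w : ℂ) (D : ℕ) (q : Polynomial ℂ) :
    opsA (List.replicate D w) (fun m => q.eval (m : ℂ) * z ^ m) =
      fun (m : ℕ) => (((shiftP z w)^[D]) q).eval (m : ℂ) * z ^ m := by
  induction D generalizing q with
  | zero => simp
  | succ D ih =>
    rw [List.replicate_succ, opsA_cons, ih, opA_poly]
    rw [show shiftP z w ((shiftP z w)^[D] q) = (shiftP z w)^[D+1] q from
      (Function.iterate_succ_apply' _ _ _).symm]

lemma stage1 (D : ℕ) (z : ℝ → ℂ) (s : Finset ℝ) :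
    ∀ Q : ℝ → Polynomial ℂ, (∀ x ∈ s, (Q x).degree < (D : WithBot ℕ)) →
    ∃ L : List ℂ, L.length = s.card * D ∧
      ∀ m, opsA L (fun m => ∑ x ∈ s, (Q x).eval (m : ℂ) * (z x) ^ m) m = 0 := by
  induction s using Finset.induction with
  | empty =>
    intro Q _
    exact ⟨[], by simp, by simp [opsA]⟩
  | @insert a s' ha ih =>
    intro Q hdeg
    obtain ⟨L', hL'len, hL'⟩ := ih (fun x => (shiftP (z x) (z a))^[D] (Q x))
      (fun x hx => lt_of_le_of_lt (degree_shiftP_iter_le _ _ _ _) (hdeg x (Finset.mem_insert_of_mem hx)))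
    refine ⟨L' ++ List.replicate D (z a), ?_, ?_⟩
    · simp [hL'len, Finset.card_insert_of_notMem ha]
      ring
    · intro m
      rw [opsA_append]
      have hrep : opsA (List.replicate D (z a))
          (fun m => ∑ x ∈ insert a s', (Q x).eval (m : ℂ) * (z x) ^ m) =
          fun (m : ℕ) => ∑ x ∈ s', (((shiftP (z x) (z a))^[D]) (Q x)).eval (m : ℂ) * (z x) ^ m := by
        rw [opsA_sum]
        funext k
        rw [Finset.sum_insert ha]
        rw [opsA_replicate, shiftP_iter_self_eq_zero (z a) D (Q a)
            (hdeg a (Finset.mem_insert_self a s'))]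
        simp only [eval_zero, zero_mul, zero_add]
        exact Finset.sum_congr rfl fun x _ => by rw [opsA_replicate]
      rw [hrep]
      exact hL' m

lemma stage2 (D : ℕ) (z : ℝ → ℂ) (s : Finset ℝ) :
    ∀ Q : ℝ → Polynomial ℂ, (∀ x ∈ s, z x ≠ 0) → (Set.InjOn z s) →
    (∀ x ∈ s, (Q x).degree < (D : WithBot ℕ)) →
    (∀ m : ℕ, ∑ x ∈ s, (Q x).eval (m : ℂ) * (z x) ^ m = 0) →
    ∀ x ∈ s, Q x = 0 := by
  induction s using Finset.induction with
  | empty => intro Q _ _ _ _ x hx; exact absurd hx (Finset.notMem_empty x)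
  | @insert a s' ha ih =>
    intro Q hz hinj hdeg hvan
    have hsub : (s' : Set ℝ) ⊆ (insert a s' : Finset ℝ) := by
      intro t ht; simp at ht ⊢; tauto
    have hzs' : ∀ x ∈ s', Q x = 0 := by
      have hvan' : ∀ m : ℕ,
          ∑ x ∈ s', (((shiftP (z x) (z a))^[D]) (Q x)).eval (m : ℂ) * (z x) ^ m = 0 := by
        intro m
        have h0 : opsA (List.replicate D (z a))
            (fun m => ∑ x ∈ insert a s', (Q x).eval (m : ℂ) * (z x) ^ m) m = 0 := by
          have : (fun m : ℕ => ∑ x ∈ insert a s', (Q x).eval (m : ℂ) * (z x) ^ m) =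
              fun _ => 0 := funext hvan
          rw [this, opsA_zero]
        rw [opsA_sum] at h0
        beta_reduce at h0
        rw [Finset.sum_insert ha] at h0
        rw [opsA_replicate, shiftP_iter_self_eq_zero (z a) D (Q a)
            (hdeg a (Finset.mem_insert_self a s'))] at h0
        simp only [eval_zero, zero_mul, zero_add] at h0
        rw [← h0]
        exact Finset.sum_congr rfl fun x _ => by rw [opsA_replicate]
      have := ih (fun x => (shiftP (z x) (z a))^[D] (Q x))
        (fun x hx => hz x (Finset.mem_insert_of_mem hx))
        (hinj.mono hsub)
        (fun x hx => lt_of_le_of_lt (degree_shiftP_iter_le _ _ _ _)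
          (hdeg x (Finset.mem_insert_of_mem hx)))
        hvan'
      intro x hx
      by_contra hQx
      exact shiftP_iter_ne_zero (hz x (Finset.mem_insert_of_mem hx))
        (fun h => ha (by
          have : x = a := hinj (hsub (by exact_mod_cast hx)) (Finset.mem_insert_self a s') h
          rwa [← this])) D hQx (this x hx)
    have hQa : Q a = 0 := by
      have hvana : ∀ m : ℕ, (Q a).eval (m : ℂ) = 0 := by
        intro m
        have h0 := hvan m
        rw [Finset.sum_insert ha, Finset.sum_eq_zero
          (fun x hx => by rw [hzs' x hx]; simp), add_zero] at h0
        exact (mul_eq_zero.mp h0).resolve_right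
          (pow_ne_zero m (hz a (Finset.mem_insert_self a s')))
      apply Polynomial.eq_zero_of_infinite_isRoot
      apply Set.Infinite.mono (s := Set.range ((↑·) : ℕ → ℂ))
      · rintro t ⟨m, rfl⟩; exact hvana m
      · exact Set.infinite_range_of_injective Nat.cast_injective
    intro x hx
    rcases Finset.mem_insert.mp hx with rfl | hx'
    · exact hQa
    · exact hzs' x hx'

lemma expand_half {n : ℕ} (x : Fin n → ℝ) (p : Fin n → Polynomial ℂ) (S : Finset ℝ)
    (hS : ∀ j, x j ∈ S) (t : ℂ) (g : ℝ → ℂ) :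
    ∑ xx ∈ S, (∑ j, if x j = xx then p j else 0).eval t * g xx
      = ∑ j, (p j).eval t * g (x j) := by
  have step1 : ∀ xx ∈ S, (∑ j, if x j = xx then p j else 0).eval t * g xx
      = ∑ j, (if x j = xx then (p j).eval t * g xx else 0) := by
    intro xx _
    rw [eval_finset_sum, Finset.sum_mul]
    exact Finset.sum_congr rfl fun j _ => by split <;> simp
  rw [Finset.sum_congr rfl step1, Finset.sum_comm]
  refine Finset.sum_congr rfl fun j _ => ?_
  rw [Finset.sum_ite_eq S (x j) (fun xx => (p j).eval t * g xx)]
  exact if_pos (hS j)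

lemma exp_inj_Ico : Set.InjOn (fun x : ℝ => Complex.exp (2 * Real.pi * Complex.I * x))
    (Set.Ico (0 : ℝ) 1) := by
  intro a ha b hb hab
  simp only at hab
  rw [Complex.exp_eq_exp_iff_exists_int] at hab
  obtain ⟨n, hn⟩ := hab
  have hne : (2 * (Real.pi : ℂ) * Complex.I) ≠ 0 := by
    refine mul_ne_zero (mul_ne_zero two_ne_zero ?_) Complex.I_ne_zero
    exact_mod_cast Real.pi_ne_zero
  have hab2 : (a : ℂ) = (b : ℂ) + (n : ℤ) := by
    have h2 : (2 * (Real.pi : ℂ) * Complex.I) * a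
        = (2 * (Real.pi : ℂ) * Complex.I) * ((b : ℂ) + n) := by
      rw [hn]; ring
    exact mul_left_cancel₀ hne h2
  have habr : a = b + (n : ℝ) := by exact_mod_cast hab2
  have hn0 : n = 0 := by
    have h1 : (-1 : ℝ) < (n : ℝ) := by
      have := ha.1; have := ha.2; have := hb.1; have := hb.2; linarith [habr]
    have h2 : ((n : ℝ)) < 1 := by
      have := ha.1; have := ha.2; have := hb.1; have := hb.2; linarith [habr]
    have h1' : (-1 : ℤ) < n := by exact_mod_cast h1
    have h2' : n < 1 := by exact_mod_cast h2
    omega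
  rw [habr, hn0]; simp

lemma exp_pow_nat (x : ℝ) (m : ℕ) :
    Complex.exp (2 * Real.pi * Complex.I * x * m)
      = (Complex.exp (2 * Real.pi * Complex.I * x)) ^ m := by
  rw [← Complex.exp_nat_mul]
  ring_nf

end ExpPolyAux

/-- Two univariate exponential polynomials, each with at most `N` terms,
pairwise distinct frequencies in `[0,1)` and nonzero polynomial coefficients of degree `< D`,
that agree at the integer samples `{0, 1, …, 2ND}` agree everywhere on `ℝ`. -/
theorem univariate_exp_poly_unique (N D : ℕ) (hN : 0 < N) (hD : 0 < D)
    (f₁ f₂ : ℝ → ℂ) (n₁ n₂ : ℕ) (hn₁ : n₁ ≤ N) (hn₂ : n₂ ≤ N)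
    (x₁ : Fin n₁ → ℝ) (x₂ : Fin n₂ → ℝ)
    (p₁ : Fin n₁ → Polynomial ℂ) (p₂ : Fin n₂ → Polynomial ℂ)
    (hx₁ : ∀ j, x₁ j ∈ Set.Ico (0 : ℝ) 1) (hx₂ : ∀ j, x₂ j ∈ Set.Ico (0 : ℝ) 1)
    (hinj₁ : Function.Injective x₁) (hinj₂ : Function.Injective x₂)
    (hp₁ : ∀ j, p₁ j ≠ 0) (hp₂ : ∀ j, p₂ j ≠ 0)
    (hd₁ : ∀ j, (p₁ j).degree < (D : WithBot ℕ))
    (hd₂ : ∀ j, (p₂ j).degree < (D : WithBot ℕ))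
    (hf₁ : ∀ ξ : ℝ, f₁ ξ =
      ∑ j, (p₁ j).eval (ξ : ℂ) * Complex.exp (2 * Real.pi * Complex.I * (x₁ j) * ξ))
    (hf₂ : ∀ ξ : ℝ, f₂ ξ =
      ∑ j, (p₂ j).eval (ξ : ℂ) * Complex.exp (2 * Real.pi * Complex.I * (x₂ j) * ξ))
    (hsamp : ∀ m : ℕ, m ≤ 2 * N * D → f₁ (m : ℝ) = f₂ (m : ℝ)) :
    ∀ ξ : ℝ, f₁ ξ = f₂ ξ := by
  classical
  set zf : ℝ → ℂ := fun x => Complex.exp (2 * Real.pi * Complex.I * x) with hzf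
  set S : Finset ℝ := Finset.image x₁ Finset.univ ∪ Finset.image x₂ Finset.univ with hSdef
  set Q : ℝ → Polynomial ℂ := fun x =>
    (∑ j, if x₁ j = x then p₁ j else 0) - (∑ j, if x₂ j = x then p₂ j else 0) with hQdef
  have hS₁ : ∀ j, x₁ j ∈ S := fun j =>
    Finset.mem_union_left _ (Finset.mem_image_of_mem x₁ (Finset.mem_univ j))
  have hS₂ : ∀ j, x₂ j ∈ S := fun j =>
    Finset.mem_union_right _ (Finset.mem_image_of_mem x₂ (Finset.mem_univ j))
  have hIco : ∀ x ∈ S, x ∈ Set.Ico (0 : ℝ) 1 := by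
    intro x hx
    rw [hSdef, Finset.mem_union] at hx
    rcases hx with hx | hx <;> rw [Finset.mem_image] at hx <;>
      obtain ⟨j, _, rfl⟩ := hx
    · exact hx₁ j
    · exact hx₂ j
  have key : ∀ ξ : ℝ,
      ∑ x ∈ S, (Q x).eval (ξ : ℂ) * Complex.exp (2 * Real.pi * Complex.I * x * ξ)
        = f₁ ξ - f₂ ξ := by
    intro ξ
    rw [hf₁, hf₂]
    rw [← expand_half x₁ p₁ S hS₁ (ξ : ℂ)
        (fun x => Complex.exp (2 * Real.pi * Complex.I * x * ξ)),
      ← expand_half x₂ p₂ S hS₂ (ξ : ℂ)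
        (fun x => Complex.exp (2 * Real.pi * Complex.I * x * ξ)),
      ← Finset.sum_sub_distrib]
    refine Finset.sum_congr rfl fun x _ => ?_
    rw [hQdef]
    simp only [Polynomial.eval_sub]
    ring
  have hdeg : ∀ x ∈ S, (Q x).degree < (D : WithBot ℕ) := by
    intro x _
    rw [hQdef]
    have hbot : (⊥ : WithBot ℕ) < (D : WithBot ℕ) := WithBot.bot_lt_coe D
    have h1 : ∀ (n : ℕ) (xx : Fin n → ℝ) (pp : Fin n → Polynomial ℂ),
        (∀ j, (pp j).degree < (D : WithBot ℕ)) →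
        (∑ j, if xx j = x then pp j else 0).degree < (D : WithBot ℕ) := by
      intro n xx pp hpp
      refine lt_of_le_of_lt (Polynomial.degree_sum_le _ _) ?_
      rw [Finset.sup_lt_iff hbot]
      intro j _
      split
      · exact hpp j
      · simpa using hbot
    exact lt_of_le_of_lt (Polynomial.degree_sub_le _ _)
      (max_lt (h1 n₁ x₁ p₁ hd₁) (h1 n₂ x₂ p₂ hd₂))
  have hcard : S.card * D ≤ 2 * N * D := by
    have h1 : S.card ≤ n₁ + n₂ := by
      refine le_trans (Finset.card_union_le _ _) ?_
      have h2 := Finset.card_image_le (s := (Finset.univ : Finset (Fin n₁))) (f := x₁)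
      have h3 := Finset.card_image_le (s := (Finset.univ : Finset (Fin n₂))) (f := x₂)
      simp only [Finset.card_univ, Fintype.card_fin] at h2 h3
      omega
    calc S.card * D ≤ (n₁ + n₂) * D := Nat.mul_le_mul_right D h1
      _ ≤ 2 * N * D := Nat.mul_le_mul_right D (by omega)
  have hU : ∀ m : ℕ,
      (∑ x ∈ S, (Q x).eval ((m : ℕ) : ℂ) * (zf x) ^ m) = f₁ (m : ℝ) - f₂ (m : ℝ) := by
    intro m
    rw [← key (m : ℝ)]
    refine Finset.sum_congr rfl fun x _ => ?_
    rw [hzf]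
    rw [← exp_pow_nat x m]
    push_cast
    ring_nf
  have hvanN : ∀ m : ℕ, (∑ x ∈ S, (Q x).eval ((m : ℕ) : ℂ) * (zf x) ^ m) = 0 := by
    obtain ⟨L, hLlen, hLrec⟩ := stage1 D zf S Q hdeg
    refine vanish_propagate L _ (2 * N * D) (by omega) hLrec ?_
    intro m hm
    rw [hU m, hsamp m hm, sub_self]
  have hQ0 : ∀ x ∈ S, Q x = 0 := by
    refine stage2 D zf S Q (fun x _ => Complex.exp_ne_zero _) ?_ hdeg hvanN
    exact exp_inj_Ico.mono hIco
  intro ξ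
  have hk := key ξ
  rw [Finset.sum_eq_zero (fun x hx => by rw [hQ0 x hx]; simp)] at hk
  exact sub_eq_zero.mp hk.symm
end

section
/- Let f₁ and f₂ be functions of the form f(ξ, η) = ∑_{j=1}^n p_j(ξ, η) e^{2πi x_j ξ}, where n ≤ N, the frequencies x_j ∈ [0,1) are pairwise distinct, and the p_j ∈ ℂ[ξ, η] are nonzero polynomials in which every variable appears with exponent < D. If f₁(m, l) = f₂(m, l) for all (m, l) ∈ {0, 1, …, 2ND} × {0, 1, …, D}, then f₁(ξ, η) = f₂(ξ, η) for all (ξ, η) ∈ ℝ². -/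
/-!
Group the terms of `f₁ - f₂` by frequency. For each fixed `l`, the grid values are
`∑ₓ qₓ(m, l) zₓ^m` with distinct `zₓ = e^{2πix} ≠ 0` and polynomials `qₓ(·, l)` of degree `< D`.
The operator `u ↦ u(· + 1) - z₀ u` on such sequences kills the `z₀`-term after `D` steps and acts
injectively on the polynomial coefficients of the other terms, so by induction on the number of
frequencies, `#frequencies · D ≤ 2ND + 1` consecutive zeros force every `qₓ(·, l)` to vanish.
As `qₓ` has degree `< D` in `η`, vanishing for `l = 0, …, D - 1` forces `qₓ = 0`.
-/
open Finset

namespace Polynomial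

variable {R ι : Type*} [CommRing R]

/-- On sequences `m ↦ p(m) z^m`, the operator `u ↦ u(· + 1) - c u` acts on `p` as
`twistedDiff c z`. -/
noncomputable def twistedDiff (c z : R) : Module.End R R[X] := z • taylor 1 - c • 1

lemma eval_twistedDiff (c z : R) (p : R[X]) (a : R) :
    (twistedDiff c z p).eval a = z * p.eval (a + 1) - c * p.eval a := by
  simp [twistedDiff, taylor_eval]

lemma natDegree_twistedDiff_le (c z : R) (p : R[X]) :
    (twistedDiff c z p).natDegree ≤ p.natDegree :=
  (natDegree_sub_le _ _).trans <|
    max_le ((natDegree_smul_le _ _).trans (natDegree_taylor p 1).le) (natDegree_smul_le _ _)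

lemma natDegree_twistedDiff_pow_le (c z : R) (t : ℕ) (p : R[X]) :
    ((twistedDiff c z ^ t) p).natDegree ≤ p.natDegree := by
  induction t with
  | zero => simp
  | succ t ih =>
    rw [pow_succ', Module.End.mul_apply]
    exact (natDegree_twistedDiff_le c z _).trans ih

lemma coeff_twistedDiff_natDegree (c z : R) (p : R[X]) :
    (twistedDiff c z p).coeff p.natDegree = (z - c) * p.leadingCoeff := by
  simp [twistedDiff, coeff_taylor_natDegree, sub_mul]

lemma twistedDiff_injective [IsDomain R] {c z : R} (h : z ≠ c) :
    Function.Injective (twistedDiff c z) := by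
  refine (injective_iff_map_eq_zero _).2 fun p hp => ?_
  have hcoeff := coeff_twistedDiff_natDegree c z p
  rw [hp, coeff_zero, eq_comm, mul_eq_zero, sub_eq_zero, leadingCoeff_eq_zero] at hcoeff
  exact hcoeff.resolve_left h

lemma twistedDiff_pow_injective [IsDomain R] {c z : R} (h : z ≠ c) (t : ℕ) :
    Function.Injective (twistedDiff c z ^ t) := by
  rw [Module.End.coe_pow]
  exact (twistedDiff_injective h).iterate t

lemma eval_taylor_sub_one_pow (t : ℕ) (p : R[X]) (a : R) :
    (((taylor 1 - 1 : Module.End R R[X]) ^ t) p).eval a = (fwdDiff 1)^[t] p.eval a := by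
  induction t generalizing a with
  | zero => simp
  | succ t ih =>
    rw [pow_succ', Module.End.mul_apply, Function.iterate_succ_apply', fwdDiff, ← ih, ← ih]
    simp [taylor_eval]

lemma twistedDiff_self_pow_eq_zero [IsDomain R] [Infinite R] (c : R) {t : ℕ} {p : R[X]}
    (hp : p.natDegree < t) : (twistedDiff c c ^ t) p = 0 := by
  have hc : twistedDiff c c = c • (taylor 1 - 1) := by rw [twistedDiff, smul_sub]
  refine Polynomial.funext fun a => ?_
  rw [hc, _root_.smul_pow, LinearMap.smul_apply, eval_smul, eval_taylor_sub_one_pow,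
    fwdDiff_iter_eq_zero_of_degree_lt hp]
  simp

lemma sum_eval_twistedDiff_mul_pow (s : Finset ι) (c : R) (z : ι → R) (r : ι → R[X]) (m : ℕ) :
    ∑ j ∈ s, (twistedDiff c (z j) (r j)).eval (m : R) * z j ^ m =
      ∑ j ∈ s, (r j).eval ((m + 1 : ℕ) : R) * z j ^ (m + 1) -
        c * ∑ j ∈ s, (r j).eval (m : R) * z j ^ m := by
  rw [mul_sum, ← sum_sub_distrib]
  refine sum_congr rfl fun j _ => ?_
  rw [eval_twistedDiff]
  push_cast
  ring

lemma sum_eval_twistedDiff_pow_mul_pow_eq_zero {s : Finset ι} (c : R) {z : ι → R}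
    {r : ι → R[X]} {L : ℕ} (h : ∀ m < L, ∑ j ∈ s, (r j).eval (m : R) * z j ^ m = 0) (t : ℕ) :
    ∀ m, m + t < L → ∑ j ∈ s, ((twistedDiff c (z j) ^ t) (r j)).eval (m : R) * z j ^ m = 0 := by
  induction t with
  | zero => simpa using h
  | succ t ih =>
    intro m hm
    simp only [pow_succ', Module.End.mul_apply]
    rw [sum_eval_twistedDiff_mul_pow, ih (m + 1) (by omega), ih m (by omega), mul_zero, sub_zero]

theorem eq_zero_of_sum_eval_mul_pow_eq_zero [IsDomain R] [CharZero R] [DecidableEq ι] {D : ℕ}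
    (s : Finset ι) {z : ι → R} (hz : ∀ j ∈ s, z j ≠ 0) (hinj : Set.InjOn z s) {r : ι → R[X]}
    (hdeg : ∀ j ∈ s, (r j).natDegree < D)
    (h : ∀ m < #s * D, ∑ j ∈ s, (r j).eval (m : R) * z j ^ m = 0) :
    ∀ j ∈ s, r j = 0 := by
  induction s using Finset.induction_on generalizing r with
  | empty => simp
  | insert j₀ s hj₀ ih =>
    rw [forall_mem_insert] at hz hdeg ⊢
    have hshift := sum_eval_twistedDiff_pow_mul_pow_eq_zero (z j₀) h D
    simp only [sum_insert hj₀, twistedDiff_self_pow_eq_zero _ hdeg.1, eval_zero, zero_mul,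
      zero_add] at hshift
    have hcard : #(insert j₀ s) * D = #s * D + D := by rw [card_insert_of_notMem hj₀, add_one_mul]
    have hs : ∀ j ∈ s, r j = 0 := by
      refine fun j hj => twistedDiff_pow_injective (hinj.ne (mem_insert_of_mem hj)
        (mem_insert_self j₀ s) (ne_of_mem_of_not_mem hj hj₀)) D ?_
      rw [map_zero]
      refine ih hz.2 (hinj.mono (by simp)) (fun j hj => ?_) (fun m hm => hshift m (by omega)) j hj
      exact (natDegree_twistedDiff_pow_le _ _ _ _).trans_lt (hdeg.2 j hj)
    refine ⟨?_, hs⟩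
    refine eq_zero_of_natDegree_lt_card_of_eval_eq_zero _
      (Nat.cast_injective.comp Fin.val_injective) (fun m => ?_) (by simpa using hdeg.1)
    have hm := h m (by omega)
    rw [sum_insert hj₀, sum_eq_zero fun j hj => by rw [hs j hj, eval_zero, zero_mul],
      add_zero] at hm
    exact (mul_eq_zero.1 hm).resolve_right (pow_ne_zero _ hz.1)

end Polynomial

namespace MvPolynomial

variable {R ι : Type*} [CommRing R]

lemma natDegree_map_eval_finSuccEquiv_le {n : ℕ} (s : Fin n → R)
    (q : MvPolynomial (Fin (n + 1)) R) :
    ((finSuccEquiv R n q).map (eval s)).natDegree ≤ q.degreeOf 0 :=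
  Polynomial.natDegree_map_le.trans (natDegree_finSuccEquiv q).le

theorem eq_zero_of_sum_eval_mul_pow_eq_zero [IsDomain R] [CharZero R] [DecidableEq ι] {D : ℕ}
    (s : Finset ι) {z : ι → R} (hz : ∀ j ∈ s, z j ≠ 0) (hinj : Set.InjOn z s)
    {q : ι → MvPolynomial (Fin 2) R} (hdeg : ∀ j ∈ s, ∀ i, (q j).degreeOf i < D)
    (h : ∀ m l : ℕ, m < #s * D → l < D → ∑ j ∈ s, eval ![(m : R), l] (q j) * z j ^ m = 0) :
    ∀ j ∈ s, q j = 0 := by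
  have hslice (l : ℕ) (hl : l < D) (j : ι) (hj : j ∈ s) (a : R) : eval ![a, l] (q j) = 0 := by
    have hr := Polynomial.eq_zero_of_sum_eval_mul_pow_eq_zero s hz hinj
      (r := fun j => (finSuccEquiv R 1 (q j)).map (eval ![(l : R)]))
      (fun j hj => (natDegree_map_eval_finSuccEquiv_le _ _).trans_lt (hdeg j hj 0))
      (fun m hm => by simpa [← eval_eq_eval_mv_eval'] using h m l hm hl) j hj
    simpa [← eval_eq_eval_mv_eval'] using congrArg (Polynomial.eval a) hr
  intro j hj
  refine eq_zero_of_eval_zero_at_prod_finset (q j) (fun _ => (range D).map Nat.castEmbedding)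
    (fun i => by simpa using hdeg j hj i) (fun x hx => ?_)
  obtain ⟨l, hl, hxl⟩ := mem_map.1 (hx 1)
  have hx' : x = ![x 0, l] := by ext i; fin_cases i <;> simp [← hxl]
  rw [hx']
  exact hslice l (mem_range.1 hl) j hj _

end MvPolynomial

open Complex Real MvPolynomial

lemma injOn_exp_two_pi_mul_I : Set.InjOn (fun x : ℝ => cexp (2 * π * I * x)) (Set.Ico 0 1) := by
  intro a ha b hb h
  have hinj := Circle.exp_injOn_Ico (a := 0) (b := 2 * π) (by simp)
    (x₁ := 2 * π * a) ⟨by nlinarith [pi_pos, ha.1], by nlinarith [pi_pos, ha.2]⟩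
    (x₂ := 2 * π * b) ⟨by nlinarith [pi_pos, hb.1], by nlinarith [pi_pos, hb.2]⟩
    (Subtype.ext (by simp only [Circle.coe_exp]; push_cast; convert h using 2 <;> ring))
  simpa [pi_ne_zero] using hinj

theorem sum_eval_mul_exp_eq_zero_of_grid {ι : Type*} [Fintype ι] {x : ι → ℝ}
    (hx : ∀ j, x j ∈ Set.Ico (0 : ℝ) 1) {p : ι → MvPolynomial (Fin 2) ℂ} {D : ℕ}
    (hdeg : ∀ j i, (p j).degreeOf i < D)
    (h : ∀ m l : ℕ, m < Fintype.card ι * D → l < D →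
      ∑ j, eval ![(m : ℂ), l] (p j) * cexp (2 * π * I * x j * m) = 0) (ξ η : ℂ) :
    ∑ j, eval ![ξ, η] (p j) * cexp (2 * π * I * x j * ξ) = 0 := by
  classical
  set T := univ.image x
  set q : ℝ → MvPolynomial (Fin 2) ℂ := fun y => ∑ j with x j = y, p j
  have hgroup (v : Fin 2 → ℂ) (ξ : ℂ) : ∑ j, eval v (p j) * cexp (2 * π * I * x j * ξ) =
      ∑ y ∈ T, eval v (q y) * cexp (2 * π * I * y * ξ) := by
    rw [← sum_fiberwise_of_maps_to (fun j _ => mem_image_of_mem x (mem_univ j))]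
    refine sum_congr rfl fun y _ => ?_
    rw [map_sum, sum_mul]
    exact sum_congr rfl fun j hj => by rw [(mem_filter.1 hj).2]
  have hT : (T : Set ℝ) ⊆ Set.Ico 0 1 := by
    simpa [T, Set.range_subset_iff] using hx
  have hq : ∀ y ∈ T, q y = 0 := by
    refine MvPolynomial.eq_zero_of_sum_eval_mul_pow_eq_zero (D := D) T
      (fun _ _ => Complex.exp_ne_zero _) (injOn_exp_two_pi_mul_I.mono hT) (fun y hy i => ?_)
      (fun m l hm hl => ?_)
    · obtain ⟨j, -, rfl⟩ := mem_image.1 hy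
      exact (degreeOf_sum_le _ _ _).trans_lt
        ((Finset.sup_lt_iff ((Nat.zero_le _).trans_lt (hdeg j i))).2 fun k _ => hdeg k i)
    · rw [← h m l (hm.trans_le (Nat.mul_le_mul_right _ card_image_le)) hl, hgroup]
      simp_rw [← Complex.exp_nat_mul]
      ring_nf
  rw [hgroup, sum_eq_zero fun y hy => by rw [hq y hy, map_zero, zero_mul]]

theorem unifreq_exp_poly_unique_general (N D : ℕ)
    (f₁ f₂ : ℝ → ℝ → ℂ) (n₁ n₂ : ℕ) (hn₁ : n₁ ≤ N) (hn₂ : n₂ ≤ N)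
    (x₁ : Fin n₁ → ℝ) (x₂ : Fin n₂ → ℝ)
    (p₁ : Fin n₁ → MvPolynomial (Fin 2) ℂ) (p₂ : Fin n₂ → MvPolynomial (Fin 2) ℂ)
    (hx₁ : ∀ j, x₁ j ∈ Set.Ico (0 : ℝ) 1) (hx₂ : ∀ j, x₂ j ∈ Set.Ico (0 : ℝ) 1)
    (hd₁ : ∀ j, ∀ i : Fin 2, (p₁ j).degreeOf i < D)
    (hd₂ : ∀ j, ∀ i : Fin 2, (p₂ j).degreeOf i < D)
    (hf₁ : ∀ ξ η : ℝ, f₁ ξ η = ∑ j, MvPolynomial.eval ![(ξ : ℂ), (η : ℂ)] (p₁ j) *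
      Complex.exp (2 * Real.pi * Complex.I * (x₁ j) * ξ))
    (hf₂ : ∀ ξ η : ℝ, f₂ ξ η = ∑ j, MvPolynomial.eval ![(ξ : ℂ), (η : ℂ)] (p₂ j) *
      Complex.exp (2 * Real.pi * Complex.I * (x₂ j) * ξ))
    (hsamp : ∀ m l : ℕ, m ≤ 2 * N * D → l ≤ D → f₁ (m : ℝ) (l : ℝ) = f₂ (m : ℝ) (l : ℝ)) :
    ∀ ξ η : ℝ, f₁ ξ η = f₂ ξ η := by
  have hdiff (ξ η : ℝ) : f₁ ξ η - f₂ ξ η = ∑ j, eval ![(ξ : ℂ), η] (Sum.elim p₁ (-p₂) j) *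
      cexp (2 * π * I * Sum.elim x₁ x₂ j * ξ) := by
    simp [hf₁, hf₂, Fintype.sum_sum_type, sub_eq_add_neg]
  intro ξ η
  rw [← sub_eq_zero, hdiff]
  refine sum_eval_mul_exp_eq_zero_of_grid (D := D) (fun j => ?_) (fun j i => ?_)
    (fun m l hm hl => ?_) ξ η
  · cases j <;> simp [hx₁, hx₂]
  · cases j <;> simp [hd₁, hd₂, degreeOf_neg]
  · have hm' : m ≤ 2 * N * D := by
      rw [Fintype.card_sum, Fintype.card_fin, Fintype.card_fin] at hm
      exact hm.le.trans (Nat.mul_le_mul_right _ (by omega))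
    have hgrid := hdiff m l
    rw [hsamp m l hm' hl.le, sub_self] at hgrid
    exact_mod_cast hgrid.symm

/-- Two bivariate exponential polynomials whose frequencies occur in the first
variable only — `f(ξ,η) = ∑_{j=1}^n p_j(ξ,η) e^{2πi x_j ξ}` with `n ≤ N`, pairwise distinct
`x_j ∈ [0,1)` and nonzero coefficients `p_j ∈ ℂ[ξ,η]` in which every variable appears with
exponent `< D` — that agree on the sampling grid `{0,…,2ND} × {0,…,D}` agree on all of `ℝ²`. -/
theorem unifreq_exp_poly_unique (N D : ℕ) (hN : 0 < N) (hD : 0 < D)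
    (f₁ f₂ : ℝ → ℝ → ℂ) (n₁ n₂ : ℕ) (hn₁ : n₁ ≤ N) (hn₂ : n₂ ≤ N)
    (x₁ : Fin n₁ → ℝ) (x₂ : Fin n₂ → ℝ)
    (p₁ : Fin n₁ → MvPolynomial (Fin 2) ℂ) (p₂ : Fin n₂ → MvPolynomial (Fin 2) ℂ)
    (hx₁ : ∀ j, x₁ j ∈ Set.Ico (0 : ℝ) 1) (hx₂ : ∀ j, x₂ j ∈ Set.Ico (0 : ℝ) 1)
    (hinj₁ : Function.Injective x₁) (hinj₂ : Function.Injective x₂)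
    (hp₁ : ∀ j, p₁ j ≠ 0) (hp₂ : ∀ j, p₂ j ≠ 0)
    (hd₁ : ∀ j, ∀ i : Fin 2, (p₁ j).degreeOf i < D)
    (hd₂ : ∀ j, ∀ i : Fin 2, (p₂ j).degreeOf i < D)
    (hf₁ : ∀ ξ η : ℝ, f₁ ξ η = ∑ j, MvPolynomial.eval ![(ξ : ℂ), (η : ℂ)] (p₁ j) *
      Complex.exp (2 * Real.pi * Complex.I * (x₁ j) * ξ))
    (hf₂ : ∀ ξ η : ℝ, f₂ ξ η = ∑ j, MvPolynomial.eval ![(ξ : ℂ), (η : ℂ)] (p₂ j) *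
      Complex.exp (2 * Real.pi * Complex.I * (x₂ j) * ξ))
    (hsamp : ∀ m l : ℕ, m ≤ 2 * N * D → l ≤ D → f₁ (m : ℝ) (l : ℝ) = f₂ (m : ℝ) (l : ℝ)) :
    ∀ ξ η : ℝ, f₁ ξ η = f₂ ξ η :=
  unifreq_exp_poly_unique_general N D f₁ f₂ n₁ n₂ hn₁ hn₂ x₁ x₂ p₁ p₂ hx₁ hx₂ hd₁ hd₂ hf₁ hf₂ hsamp
end

section
/- Let f₁ and f₂ be bivariate exponential polynomials, each with at most N terms, pairwise distinct frequencies in [0,1)², and nonzero polynomial coefficients of degree < D, with frequency sets V₁ and V₂ respectively. Suppose: (a) f₁(m, n) = f₂(m, n) for every (m, n) in the sampling set A_N(D); and (b) for every x ∈ ℝ, the number of points of V₁ with first coordinate x equals the number of points of V₂ with first coordinate x. Then f₁(ξ, η) = f₂(ξ, η) for all (ξ, η) ∈ ℝ². -/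
/-- The sampling set `A_N(D) = ⋃_{r=1}^{N} [2⌊N/r⌋D]₀ × [2rD]₀ ⊆ ℤ²`
(represented as a finite set of pairs of natural numbers). -/
def sampSet (N D : ℕ) : Finset (ℕ × ℕ) :=
  (Finset.Icc 1 N).biUnion fun r =>
    Finset.range (2 * (N / r) * D + 1) ×ˢ Finset.range (2 * r * D + 1)

/-- `f : ℝ² → ℂ` is a bivariate exponential polynomial with at most `N` terms, (pairwise
distinct) frequencies given by the finite set `V ⊆ [0,1)²`, and nonzero polynomial coefficients
in which every variable appears with exponent `< D`:
`f(ξ,η) = ∑_{(x,y) ∈ V} p_{(x,y)}(ξ,η) e^{2πi (xξ + yη)}`. -/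
def IsExpPoly2 (N D : ℕ) (f : ℝ → ℝ → ℂ) (V : Finset (ℝ × ℝ)) : Prop :=
  ∃ p : ℝ × ℝ → MvPolynomial (Fin 2) ℂ,
    V.card ≤ N ∧
    (∀ v ∈ V, v.1 ∈ Set.Ico (0 : ℝ) 1 ∧ v.2 ∈ Set.Ico (0 : ℝ) 1) ∧
    (∀ v ∈ V, p v ≠ 0) ∧
    (∀ v ∈ V, ∀ i : Fin 2, (p v).degreeOf i < D) ∧
    ∀ ξ η : ℝ, f ξ η = ∑ v ∈ V, MvPolynomial.eval ![(ξ : ℂ), (η : ℂ)] (p v) *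
      Complex.exp (2 * Real.pi * Complex.I * (v.1 * ξ + v.2 * η))



section Aux

open Polynomial MvPolynomial



lemma taylor_one_degree (f : ℂ[X]) : (Polynomial.taylor 1 f).degree = f.degree := by
  rcases eq_or_ne f 0 with rfl | hf
  · simp
  · have h1 : Polynomial.taylor 1 f ≠ 0 := fun h => hf (by
      simpa using (Polynomial.taylor_injective (1:ℂ)) (h.trans (map_zero _).symm))
    rw [Polynomial.degree_eq_natDegree hf, Polynomial.degree_eq_natDegree h1,
      Polynomial.natDegree_taylor]

lemma taylor_one_leadingCoeff (f : ℂ[X]) :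
    (Polynomial.taylor 1 f).leadingCoeff = f.leadingCoeff := by
  rw [Polynomial.taylor_apply,
    Polynomial.leadingCoeff_comp (by rw [Polynomial.natDegree_X_add_C]; exact one_ne_zero),
    Polynomial.leadingCoeff_X_add_C, one_pow, mul_one]

/-- Key 1-D lemma: an exponential sum with distinct nonzero bases and polynomial
coefficients vanishing on enough consecutive naturals has all coefficients zero. -/
lemma lemA {ι : Type*} [DecidableEq ι] :
    ∀ (M : ℕ) (s : Finset ι) (ω : ι → ℂ) (P : ι → ℂ[X]) (d : ι → ℕ),
    Set.InjOn ω s → (∀ i ∈ s, ω i ≠ 0) →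
    (∀ i ∈ s, (P i).degree < (d i : ℕ)) →
    (∑ i ∈ s, d i) ≤ M →
    (∀ n : ℕ, n < M → ∑ i ∈ s, (P i).eval (n : ℂ) * ω i ^ n = 0) →
    ∀ i ∈ s, P i = 0 := by
  intro M
  induction M with
  | zero =>
    intro s ω P d hinj h0 hdeg hsum hvan i hi
    have hd0 : d i = 0 := by
      have := Finset.single_le_sum (f := d) (fun j _ => Nat.zero_le _) hi
      omega
    have h := hdeg i hi
    rw [hd0] at h
    exact Polynomial.degree_eq_bot.mp (Nat.WithBot.lt_zero_iff.mp (by simpa using h))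
  | succ M ih =>
    intro s ω P d hinj h0 hdeg hsum hvan
    by_cases hex : ∃ i₀ ∈ s, 0 < d i₀
    · obtain ⟨i₀, hi₀s, hdi₀⟩ := hex
      set P' : ι → ℂ[X] := fun i => ω i • Polynomial.taylor 1 (P i) - ω i₀ • P i with hP'def
      set d' : ι → ℕ := Function.update d i₀ (d i₀ - 1) with hd'def
      -- degree bound
      have hdeg' : ∀ i ∈ s, (P' i).degree < (d' i : ℕ) := by
        intro i hi
        rcases eq_or_ne i i₀ with rfl | hne
        · simp only [hd'def, Function.update_self]
          have h1 : P' i = ω i • (Polynomial.taylor 1 (P i) - P i) := by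
            rw [smul_sub]
          rcases eq_or_ne (P i) 0 with hPi | hPi
          · rw [h1, hPi]
            simp only [map_zero, sub_zero, smul_zero, Polynomial.degree_zero]
            exact WithBot.bot_lt_coe _
          · have htne : Polynomial.taylor 1 (P i) ≠ 0 := fun h => hPi (by
              simpa using (Polynomial.taylor_injective (1:ℂ)) (h.trans (map_zero _).symm))
            have hlt : (Polynomial.taylor 1 (P i) - P i).degree < (P i).degree := by
              have := Polynomial.degree_sub_lt (taylor_one_degree (P i)) htne
                (taylor_one_leadingCoeff (P i))
              rwa [taylor_one_degree] at this
            have hPd : (P i).degree ≤ ((d i - 1 : ℕ) : WithBot ℕ) := by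
              have : (P i).natDegree < d i := by
                rw [Polynomial.natDegree_lt_iff_degree_lt hPi]; exact hdeg i hi
              rw [Polynomial.degree_eq_natDegree hPi]
              exact_mod_cast Nat.le_sub_one_of_lt this
            calc (P' i).degree ≤ (Polynomial.taylor 1 (P i) - P i).degree := by
                  rw [h1]; exact Polynomial.degree_smul_le _ _
              _ < ((d i - 1 : ℕ) : WithBot ℕ) := lt_of_lt_of_le hlt hPd
        · simp only [hd'def, Function.update_of_ne hne]
          refine lt_of_le_of_lt (Polynomial.degree_sub_le _ _) ?_
          rw [max_lt_iff]
          constructor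
          · refine lt_of_le_of_lt ?_ (hdeg i hi)
            refine le_trans (Polynomial.degree_smul_le _ _) ?_
            rw [taylor_one_degree]
          · exact lt_of_le_of_lt (Polynomial.degree_smul_le _ _) (hdeg i hi)
      -- weight bound
      have hsum' : ∑ i ∈ s, d' i ≤ M := by
        have h1 : ∑ i ∈ s, d' i = (d i₀ - 1) + ∑ i ∈ s.erase i₀, d i := by
          rw [hd'def, ← Finset.add_sum_erase _ _ hi₀s, Function.update_self]
          congr 1
          exact Finset.sum_congr rfl fun j hj =>
            Function.update_of_ne (Finset.ne_of_mem_erase hj) _ _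
        have h2 : ∑ i ∈ s, d i = d i₀ + ∑ i ∈ s.erase i₀, d i :=
          (Finset.add_sum_erase _ _ hi₀s).symm
        omega
      -- vanishing
      have hvan' : ∀ n : ℕ, n < M → ∑ i ∈ s, (P' i).eval (n : ℂ) * ω i ^ n = 0 := by
        intro n hn
        have e1 : ∀ i, (P' i).eval (n : ℂ)
            = ω i * (P i).eval ((n+1 : ℕ) : ℂ) - ω i₀ * (P i).eval (n : ℂ) := by
          intro i
          simp only [hP'def, Polynomial.eval_sub, Polynomial.eval_smul,
            Polynomial.taylor_eval, smul_eq_mul]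
          push_cast
          ring
        calc ∑ i ∈ s, (P' i).eval (n : ℂ) * ω i ^ n
            = (∑ i ∈ s, (P i).eval ((n+1 : ℕ) : ℂ) * ω i ^ (n+1))
              - ω i₀ * ∑ i ∈ s, (P i).eval (n : ℂ) * ω i ^ n := by
              rw [Finset.mul_sum, ← Finset.sum_sub_distrib]
              refine Finset.sum_congr rfl fun i hi => ?_
              rw [e1]; ring
          _ = 0 := by rw [hvan n (by omega), hvan (n+1) (by omega)]; try ring
      have hP'0 : ∀ i ∈ s, P' i = 0 := ih s ω P' d' hinj h0 hdeg' hsum' hvan'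
      -- other terms vanish
      have hothers : ∀ i ∈ s, i ≠ i₀ → P i = 0 := by
        intro i hi hne
        by_contra hPi
        have heq : ω i • Polynomial.taylor 1 (P i) = ω i₀ • P i :=
          sub_eq_zero.mp (hP'0 i hi)
        have hlc : ω i * (P i).leadingCoeff = ω i₀ * (P i).leadingCoeff := by
          simpa [Polynomial.smul_eq_C_mul, Polynomial.leadingCoeff_mul,
            taylor_one_leadingCoeff] using congrArg Polynomial.leadingCoeff heq
        have hωne : ω i ≠ ω i₀ := fun h => hne (hinj hi hi₀s h)
        have : (P i).leadingCoeff = 0 := by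
          have h2 : (ω i - ω i₀) * (P i).leadingCoeff = 0 := by ring_nf; linear_combination hlc
          rcases mul_eq_zero.mp h2 with h | h
          · exact absurd (sub_eq_zero.mp h) hωne
          · exact h
        exact hPi (Polynomial.leadingCoeff_eq_zero.mp this)
      -- now the i₀ term
      have hi₀0 : P i₀ = 0 := by
        rcases eq_or_ne (P i₀) 0 with h | hPi
        · exact h
        have heval : ∀ n : ℕ, n < M + 1 → (P i₀).eval (n : ℂ) = 0 := by
          intro n hn
          have h1 := hvan n hn
          rw [Finset.sum_eq_single_of_mem i₀ hi₀s
            (fun i hi hne => by rw [hothers i hi hne]; simp)] at h1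
          exact (mul_eq_zero.mp h1).resolve_right (pow_ne_zero n (h0 i₀ hi₀s))
        apply Polynomial.eq_zero_of_natDegree_lt_card_of_eval_eq_zero' _
          ((Finset.range (M+1)).image (Nat.cast : ℕ → ℂ))
        · intro z hz
          obtain ⟨n, hn, rfl⟩ := Finset.mem_image.mp hz
          exact heval n (Finset.mem_range.mp hn)
        · rw [Finset.card_image_of_injective _ Nat.cast_injective, Finset.card_range]
          have h1 : (P i₀).natDegree < d i₀ := by
            rw [Polynomial.natDegree_lt_iff_degree_lt hPi]; exact hdeg i₀ hi₀s
          have h2 : d i₀ ≤ M + 1 :=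
            le_trans (Finset.single_le_sum (f := d) (fun j _ => Nat.zero_le _) hi₀s) hsum
          omega
      intro i hi
      rcases eq_or_ne i i₀ with rfl | hne
      · exact hi₀0
      · exact hothers i hi hne
    · -- all degrees zero
      push_neg at hex
      intro i hi
      have hd0 : d i = 0 := Nat.le_zero.mp (hex i hi)
      have h := hdeg i hi
      rw [hd0] at h
      exact Polynomial.degree_eq_bot.mp (Nat.WithBot.lt_zero_iff.mp (by simpa using h))


/-- Partial evaluation in the second variable, as a polynomial in the first. -/
noncomputable def pev0 (b : ℂ) (q : MvPolynomial (Fin 2) ℂ) : ℂ[X] :=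
  MvPolynomial.aeval ![Polynomial.X, Polynomial.C b] q

/-- Partial evaluation in the first variable, as a polynomial in the second. -/
noncomputable def pev1 (a : ℂ) (q : MvPolynomial (Fin 2) ℂ) : ℂ[X] :=
  MvPolynomial.aeval ![Polynomial.C a, Polynomial.X] q

lemma pev0_eval (a b : ℂ) (q : MvPolynomial (Fin 2) ℂ) :
    (pev0 b q).eval a = MvPolynomial.eval ![a, b] q := by
  have h : (Polynomial.aeval a : ℂ[X] →ₐ[ℂ] ℂ).comp
      (MvPolynomial.aeval ![Polynomial.X, Polynomial.C b])
      = MvPolynomial.aeval ![a, b] := by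
    apply MvPolynomial.algHom_ext
    intro i
    fin_cases i <;> simp
  have h2 := DFunLike.congr_fun h q
  simp only [AlgHom.coe_comp, Function.comp_apply] at h2
  rw [pev0, ← Polynomial.coe_aeval_eq_eval, h2, ← MvPolynomial.coe_aeval_eq_eval]
  rfl

lemma pev1_eval (a b : ℂ) (q : MvPolynomial (Fin 2) ℂ) :
    (pev1 a q).eval b = MvPolynomial.eval ![a, b] q := by
  have h : (Polynomial.aeval b : ℂ[X] →ₐ[ℂ] ℂ).comp
      (MvPolynomial.aeval ![Polynomial.C a, Polynomial.X])
      = MvPolynomial.aeval ![a, b] := by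
    apply MvPolynomial.algHom_ext
    intro i
    fin_cases i <;> simp
  have h2 := DFunLike.congr_fun h q
  simp only [AlgHom.coe_comp, Function.comp_apply] at h2
  rw [pev1, ← Polynomial.coe_aeval_eq_eval, h2, ← MvPolynomial.coe_aeval_eq_eval]
  rfl

lemma pev0_natDegree (b : ℂ) (q : MvPolynomial (Fin 2) ℂ) :
    (pev0 b q).natDegree ≤ q.degreeOf 0 := by
  rw [pev0]
  conv_lhs => rw [MvPolynomial.as_sum q, map_sum]
  apply Polynomial.natDegree_sum_le_of_forall_le
  intro m hm
  rw [MvPolynomial.aeval_monomial, Finsupp.prod_fintype _ _ (fun i => pow_zero _),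
    Fin.prod_univ_two]
  simp only [Matrix.cons_val_zero, Matrix.cons_val_one, Matrix.head_cons]
  refine le_trans Polynomial.natDegree_mul_le ?_
  refine le_trans (add_le_add le_rfl Polynomial.natDegree_mul_le) ?_
  simp only [Polynomial.natDegree_pow, ← Polynomial.C_pow, Polynomial.natDegree_C,
    Polynomial.natDegree_X, mul_one, Nat.mul_zero, add_zero]
  have := MvPolynomial.monomial_le_degreeOf 0 hm
  simp only [Polynomial.algebraMap_eq]
  rw [Polynomial.natDegree_C]
  omega

lemma pev1_natDegree (a : ℂ) (q : MvPolynomial (Fin 2) ℂ) :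
    (pev1 a q).natDegree ≤ q.degreeOf 1 := by
  rw [pev1]
  conv_lhs => rw [MvPolynomial.as_sum q, map_sum]
  apply Polynomial.natDegree_sum_le_of_forall_le
  intro m hm
  rw [MvPolynomial.aeval_monomial, Finsupp.prod_fintype _ _ (fun i => pow_zero _),
    Fin.prod_univ_two]
  simp only [Matrix.cons_val_zero, Matrix.cons_val_one, Matrix.head_cons]
  refine le_trans Polynomial.natDegree_mul_le ?_
  refine le_trans (add_le_add le_rfl Polynomial.natDegree_mul_le) ?_
  simp only [Polynomial.natDegree_pow, ← Polynomial.C_pow, Polynomial.natDegree_C,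
    Polynomial.natDegree_X, mul_one, Nat.mul_zero, add_zero]
  have := MvPolynomial.monomial_le_degreeOf 1 hm
  simp only [Polynomial.algebraMap_eq]
  rw [Polynomial.natDegree_C]
  omega


lemma exp_two_pi_inj {a b : ℝ} (ha : a ∈ Set.Ico (0:ℝ) 1) (hb : b ∈ Set.Ico (0:ℝ) 1)
    (h : Complex.exp (2 * Real.pi * Complex.I * (a:ℂ)) =
      Complex.exp (2 * Real.pi * Complex.I * (b:ℂ))) : a = b := by
  obtain ⟨n, hn⟩ := Complex.exp_eq_exp_iff_exists_int.mp h
  have h2 : (2 * (Real.pi:ℂ) * Complex.I) ≠ 0 := by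
    simp [Real.pi_ne_zero, Complex.I_ne_zero, Complex.ofReal_ne_zero]
  have h3 : (a : ℂ) = (b : ℂ) + (n : ℂ) := by
    apply mul_left_cancel₀ h2
    linear_combination hn
  have h4 : a = b + (n : ℝ) := by exact_mod_cast h3
  have h5 : (n:ℝ) < 1 := by
    have := ha.1; have := ha.2; have := hb.1; have := hb.2; linarith
  have h6 : (-1:ℝ) < n := by
    have := ha.1; have := ha.2; have := hb.1; have := hb.2; linarith
  have h7 : n < 1 := by exact_mod_cast h5
  have h8 : -1 < n := by exact_mod_cast h6
  have : n = 0 := by omega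
  rw [this] at h4; simpa using h4


end Aux

/-- Two bivariate exponential polynomials with at most `N` terms, frequencies
in `[0,1)²` and nonzero coefficients of degree `< D` that (a) agree on the sampling set
`A_N(D)` and (b) have, above every `x ∈ ℝ`, equally many frequencies, agree on all of `ℝ²`. -/
theorem exp_poly_unique_given_projections (N D : ℕ) (hN : 0 < N) (hD : 0 < D)
    (f₁ f₂ : ℝ → ℝ → ℂ) (V₁ V₂ : Finset (ℝ × ℝ))
    (h₁ : IsExpPoly2 N D f₁ V₁) (h₂ : IsExpPoly2 N D f₂ V₂)
    (ha : ∀ mn ∈ sampSet N D, f₁ (mn.1 : ℝ) (mn.2 : ℝ) = f₂ (mn.1 : ℝ) (mn.2 : ℝ))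
    (hb : ∀ x : ℝ, {v : ℝ × ℝ | v ∈ V₁ ∧ v.1 = x}.ncard =
      {v : ℝ × ℝ | v ∈ V₂ ∧ v.1 = x}.ncard) :
    ∀ ξ η : ℝ, f₁ ξ η = f₂ ξ η := by
  classical
  obtain ⟨p₁, hc₁, hIco₁, -, hdeg₁, hf₁⟩ := h₁
  obtain ⟨p₂, hc₂, hIco₂, -, hdeg₂, hf₂⟩ := h₂
  set V : Finset (ℝ × ℝ) := V₁ ∪ V₂ with hV
  set q : ℝ × ℝ → MvPolynomial (Fin 2) ℂ :=
    fun v => (if v ∈ V₁ then p₁ v else 0) - (if v ∈ V₂ then p₂ v else 0) with hq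
  have hVIco : ∀ v ∈ V, v.1 ∈ Set.Ico (0:ℝ) 1 ∧ v.2 ∈ Set.Ico (0:ℝ) 1 := by
    intro v hv
    rcases Finset.mem_union.mp hv with h | h
    exacts [hIco₁ v h, hIco₂ v h]
  have hqdeg : ∀ v, ∀ i : Fin 2, (q v).degreeOf i < D := by
    intro v i
    refine lt_of_le_of_lt (MvPolynomial.degreeOf_sub_le i _ _) ?_
    rw [max_lt_iff]
    constructor <;> split_ifs with h
    · exact hdeg₁ v h i
    · simpa [MvPolynomial.degreeOf_zero] using hD
    · exact hdeg₂ v h i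
    · simpa [MvPolynomial.degreeOf_zero] using hD
  have hg : ∀ ξ η : ℝ, f₁ ξ η - f₂ ξ η =
      ∑ v ∈ V, MvPolynomial.eval ![(ξ:ℂ), (η:ℂ)] (q v) *
        Complex.exp (2 * Real.pi * Complex.I * (v.1 * ξ + v.2 * η)) := by
    intro ξ η
    rw [hf₁ ξ η, hf₂ ξ η]
    have key : ∀ v ∈ V, MvPolynomial.eval ![(ξ:ℂ), (η:ℂ)] (q v) *
        Complex.exp (2 * Real.pi * Complex.I * (v.1 * ξ + v.2 * η))
        = (if v ∈ V₁ then MvPolynomial.eval ![(ξ:ℂ), (η:ℂ)] (p₁ v) *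
            Complex.exp (2 * Real.pi * Complex.I * (v.1 * ξ + v.2 * η)) else 0)
          - (if v ∈ V₂ then MvPolynomial.eval ![(ξ:ℂ), (η:ℂ)] (p₂ v) *
            Complex.exp (2 * Real.pi * Complex.I * (v.1 * ξ + v.2 * η)) else 0) := by
      intro v _
      simp only [hq, map_sub, apply_ite (MvPolynomial.eval ![(ξ:ℂ), (η:ℂ)]), map_zero]
      split_ifs <;> ring
    rw [Finset.sum_congr rfl key, Finset.sum_sub_distrib,
      Finset.sum_ite_mem, Finset.sum_ite_mem,
      Finset.inter_eq_right.mpr Finset.subset_union_left,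
      Finset.inter_eq_right.mpr Finset.subset_union_right]
  set X : Finset ℝ := V.image Prod.fst with hX
  set col : ℝ → Finset (ℝ × ℝ) := fun x => V.filter (fun v => v.1 = x) with hcol
  set c1 : ℝ → ℕ := fun x => (V₁.filter (fun v => v.1 = x)).card with hc1
  have hc2 : ∀ x, (V₂.filter (fun v => v.1 = x)).card = c1 x := by
    intro x
    have h1 := hb x
    have e : ∀ (W : Finset (ℝ×ℝ)),
        {v : ℝ×ℝ | v ∈ W ∧ v.1 = x} = ↑(W.filter (fun v => v.1 = x)) := by
      intro W; ext v; simp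
    rw [e V₁, e V₂, Set.ncard_coe_finset, Set.ncard_coe_finset] at h1
    exact h1.symm
  have hcol_card : ∀ x, (col x).card ≤ 2 * c1 x := by
    intro x
    have hsub : col x ⊆ V₁.filter (fun v => v.1 = x) ∪ V₂.filter (fun v => v.1 = x) := by
      intro v hv
      simp only [hcol, Finset.mem_filter, Finset.mem_union, hV] at hv ⊢
      tauto
    have h2 := hc2 x
    calc (col x).card ≤ _ := Finset.card_le_card hsub
      _ ≤ (V₁.filter (fun v => v.1 = x)).card + (V₂.filter (fun v => v.1 = x)).card :=
          Finset.card_union_le _ _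
      _ ≤ 2 * c1 x := by rw [h2]; simp [hc1]; omega
  have hsum_c1 : ∑ x ∈ X, c1 x = V₁.card := by
    rw [hc1]
    exact (Finset.card_eq_sum_card_fiberwise (fun v hv =>
      Finset.mem_image_of_mem Prod.fst (Finset.mem_union_left _ hv))).symm
  set G : ℝ → ℝ → ℝ → ℂ := fun x ξ η => ∑ v ∈ col x,
    MvPolynomial.eval ![(ξ:ℂ), (η:ℂ)] (q v) *
      Complex.exp (2 * Real.pi * Complex.I * (v.2 * η)) with hG
  have hgG : ∀ ξ η : ℝ, f₁ ξ η - f₂ ξ η =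
      ∑ x ∈ X, G x ξ η * Complex.exp (2 * Real.pi * Complex.I * (x * ξ)) := by
    intro ξ η
    rw [hg ξ η,
      ← Finset.sum_fiberwise_of_maps_to (fun v hv => Finset.mem_image_of_mem Prod.fst hv)
        (fun v => MvPolynomial.eval ![(ξ:ℂ), (η:ℂ)] (q v) *
          Complex.exp (2 * Real.pi * Complex.I * (v.1 * ξ + v.2 * η)))]
    refine Finset.sum_congr rfl fun x hx => ?_
    rw [hG, Finset.sum_mul]
    refine Finset.sum_congr rfl fun v hv => ?_
    have hv1 : v.1 = x := (Finset.mem_filter.mp hv).2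
    have hsplit : Complex.exp (2 * (Real.pi:ℂ) * Complex.I * ((v.1:ℂ) * (ξ:ℂ) + (v.2:ℂ) * (η:ℂ)))
        = Complex.exp (2 * (Real.pi:ℂ) * Complex.I * ((v.2:ℂ) * (η:ℂ))) *
          Complex.exp (2 * (Real.pi:ℂ) * Complex.I * ((v.1:ℂ) * (ξ:ℂ))) := by
      rw [← Complex.exp_add]; congr 1; ring
    rw [hsplit, hv1]
    ring
  have hXIco : ∀ x ∈ X, x ∈ Set.Ico (0:ℝ) 1 := by
    intro x hx
    obtain ⟨v, hv, rfl⟩ := Finset.mem_image.mp hx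
    exact (hVIco v hv).1
  have key : ∀ r : ℕ, r ≤ N → ∀ x ∈ X, c1 x ≤ r → ∀ ξ η : ℝ, G x ξ η = 0 := by
    intro r
    induction r with
    | zero =>
      intro _ x hx hcx ξ η
      have hempty : col x = ∅ := by
        apply Finset.card_eq_zero.mp
        have := hcol_card x
        omega
      simp [hG, hempty]
    | succ r ih =>
      intro hrN
      set A : Finset ℝ := X.filter (fun x => r < c1 x) with hA
      have hA_card : A.card * (r+1) ≤ N := by
        calc A.card * (r+1) = ∑ _x ∈ A, (r+1) := by rw [Finset.sum_const, smul_eq_mul, mul_comm]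
          _ ≤ ∑ x ∈ A, c1 x := Finset.sum_le_sum fun x hx => (Finset.mem_filter.mp hx).2
          _ ≤ ∑ x ∈ X, c1 x := Finset.sum_le_sum_of_subset (Finset.filter_subset _ _)
          _ = V₁.card := hsum_c1
          _ ≤ N := hc₁
      have hAK : A.card ≤ N / (r+1) := (Nat.le_div_iff_mul_le (Nat.succ_pos r)).mpr hA_card
      have step1 : ∀ n : ℕ, n ≤ 2*(r+1)*D → ∀ x ∈ A, ∀ ξ : ℝ, G x ξ (n:ℝ) = 0 := by
        intro n hn
        set P : ℝ → Polynomial ℂ := fun x => ∑ v ∈ col x,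
          Polynomial.C (Complex.exp (2 * Real.pi * Complex.I * (v.2 * (n:ℝ)))) *
            pev0 ((n:ℕ):ℂ) (q v) with hP
        have hPeval : ∀ (x : ℝ) (z : ℂ), (P x).eval z = ∑ v ∈ col x,
            MvPolynomial.eval ![z, ((n:ℝ):ℂ)] (q v) *
              Complex.exp (2 * Real.pi * Complex.I * (v.2 * (n:ℝ))) := by
          intro x z
          rw [hP, Polynomial.eval_finset_sum]
          refine Finset.sum_congr rfl fun v hv => ?_
          rw [Polynomial.eval_mul, Polynomial.eval_C, pev0_eval]
          push_cast
          ring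
        have hQ : ∀ x ∈ A, P x = 0 := by
          apply lemA (2*(N/(r+1))*D + 1) A (fun x => Complex.exp (2*Real.pi*Complex.I*(x:ℂ)))
            P (fun _ => D)
          · intro a ha b hb hab
            exact exp_two_pi_inj (hXIco a (Finset.filter_subset _ _ ha))
              (hXIco b (Finset.filter_subset _ _ hb)) hab
          · intro i _; exact Complex.exp_ne_zero _
          · intro x hx
            rw [hP]
            refine lt_of_le_of_lt (Polynomial.degree_sum_le _ _) ?_
            rw [Finset.sup_lt_iff (by exact WithBot.bot_lt_coe D)]
            intro v hv
            refine lt_of_le_of_lt Polynomial.degree_le_natDegree ?_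
            rw [Nat.cast_lt]
            have h7 : ∀ (c : ℂ) (g : Polynomial ℂ), (Polynomial.C c * g).natDegree ≤ g.natDegree := by
              intro c g
              simpa using Polynomial.natDegree_mul_le (p := Polynomial.C c) (q := g)
            exact lt_of_le_of_lt (h7 _ _)
              (lt_of_le_of_lt (pev0_natDegree ((n:ℕ):ℂ) (q v)) (hqdeg v 0))
          · have h1 : A.card * D ≤ (N/(r+1)) * D := Nat.mul_le_mul_right D hAK
            have h2 : 2*(N/(r+1))*D = 2*((N/(r+1))*D) := by ring
            simp only [Finset.sum_const, smul_eq_mul]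
            omega
          · intro k hk
            have hmem : ((k, n) : ℕ × ℕ) ∈ sampSet N D := by
              apply Finset.mem_biUnion.mpr
              exact ⟨r+1, Finset.mem_Icc.mpr ⟨by omega, hrN⟩,
                Finset.mem_product.mpr ⟨Finset.mem_range.mpr hk, Finset.mem_range.mpr (by omega)⟩⟩
            have hzero : f₁ (k:ℝ) (n:ℝ) - f₂ (k:ℝ) (n:ℝ) = 0 := by
              have := ha (k, n) hmem
              simpa using sub_eq_zero.mpr this
            rw [hgG (k:ℝ) (n:ℝ)] at hzero
            rw [← Finset.sum_filter_add_sum_filter_not X (fun x => r < c1 x)] at hzero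
            have hdead : ∑ x ∈ X.filter (fun x => ¬ r < c1 x),
                G x (k:ℝ) (n:ℝ) * Complex.exp (2 * Real.pi * Complex.I * ((x:ℂ) * ((k:ℝ):ℂ))) = 0 := by
              apply Finset.sum_eq_zero
              intro x hx
              have hx' := Finset.mem_filter.mp hx
              rw [ih (by omega) x hx'.1 (by omega), zero_mul]
            rw [hdead, add_zero] at hzero
            calc ∑ x ∈ A, (P x).eval ((k:ℕ):ℂ) * (Complex.exp (2*Real.pi*Complex.I*(x:ℂ)))^k
                = ∑ x ∈ A, G x (k:ℝ) (n:ℝ) *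
                  Complex.exp (2 * Real.pi * Complex.I * ((x:ℂ) * ((k:ℝ):ℂ))) := by
                  refine Finset.sum_congr rfl fun x hx => ?_
                  rw [hPeval x ((k:ℕ):ℂ), ← Complex.exp_nat_mul]
                  have e2 : ((k:ℕ):ℂ) * (2*Real.pi*Complex.I*(x:ℂ))
                      = 2 * Real.pi * Complex.I * ((x:ℂ) * ((k:ℝ):ℂ)) := by
                    push_cast; ring
                  rw [e2]
                  have hGu : G x (k:ℝ) (n:ℝ) = ∑ v ∈ col x,
                      MvPolynomial.eval ![((k:ℝ):ℂ), ((n:ℝ):ℂ)] (q v) *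
                        Complex.exp (2*Real.pi*Complex.I*((v.2:ℂ)*((n:ℝ):ℂ))) := rfl
                  rw [hGu]
                  push_cast
                  try ring
              _ = 0 := hzero
        intro x hxA ξ
        have hPx := hQ x hxA
        have h3 := hPeval x (ξ:ℂ)
        rw [hPx] at h3
        simp only [Polynomial.eval_zero] at h3
        simp only [hG]
        rw [← h3]
      intro x hxX hcx ξ η
      rcases le_or_gt (c1 x) r with hle | hgt
      · exact ih (by omega) x hxX hle ξ η
      have hxA : x ∈ A := Finset.mem_filter.mpr ⟨hxX, hgt⟩
      have hQ : ∀ v ∈ col x, pev1 (ξ:ℂ) (q v) = 0 := by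
        apply lemA (2*(r+1)*D + 1) (col x)
          (fun v => Complex.exp (2*Real.pi*Complex.I*((v.2:ℝ):ℂ)))
          (fun v => pev1 (ξ:ℂ) (q v)) (fun _ => D)
        · intro v hv w hw hvw
          have h5 : v.2 = w.2 := exp_two_pi_inj (hVIco v (Finset.filter_subset _ _ hv)).2
            (hVIco w (Finset.filter_subset _ _ hw)).2 hvw
          have h6 : v.1 = x := (Finset.mem_filter.mp (by exact hv : v ∈ col x)).2
          have h7 : w.1 = x := (Finset.mem_filter.mp (by exact hw : w ∈ col x)).2
          exact Prod.ext (h6.trans h7.symm) h5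
        · intro v _; exact Complex.exp_ne_zero _
        · intro v hv
          refine lt_of_le_of_lt Polynomial.degree_le_natDegree ?_
          rw [Nat.cast_lt]
          exact lt_of_le_of_lt (pev1_natDegree _ _) (hqdeg v 1)
        · simp only [Finset.sum_const, smul_eq_mul]
          have h5 := hcol_card x
          have h6 : (col x).card * D ≤ 2 * c1 x * D := Nat.mul_le_mul_right D h5
          have h7 : 2 * c1 x * D ≤ 2 * (r+1) * D :=
            Nat.mul_le_mul_right D (by omega)
          omega
        · intro n hn
          have h5 := step1 n (by omega) x hxA ξ
          simp only [hG] at h5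
          calc ∑ v ∈ col x, (pev1 (ξ:ℂ) (q v)).eval ((n:ℕ):ℂ) *
                (Complex.exp (2*Real.pi*Complex.I*((v.2:ℝ):ℂ)))^n
              = ∑ v ∈ col x, MvPolynomial.eval ![(ξ:ℂ), ((n:ℝ):ℂ)] (q v) *
                Complex.exp (2 * Real.pi * Complex.I * ((v.2:ℂ) * ((n:ℝ):ℂ))) := by
                refine Finset.sum_congr rfl fun v hv => ?_
                rw [pev1_eval, ← Complex.exp_nat_mul]
                have e2 : ((n:ℕ):ℂ) * (2*Real.pi*Complex.I*((v.2:ℝ):ℂ))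
                    = 2 * Real.pi * Complex.I * ((v.2:ℂ) * ((n:ℝ):ℂ)) := by
                  push_cast; ring
                rw [e2]
                try norm_cast
            _ = 0 := h5
      simp only [hG]
      apply Finset.sum_eq_zero
      intro v hv
      rw [← pev1_eval (ξ:ℂ) (η:ℂ) (q v), hQ v hv]
      simp
  intro ξ η
  have hall : ∀ x ∈ X, G x ξ η = 0 := by
    intro x hx
    refine key N le_rfl x hx ?_ ξ η
    exact le_trans (Finset.card_filter_le _ _) hc₁
  have h0 := hgG ξ η
  rw [Finset.sum_eq_zero (fun x hx => by rw [hall x hx, zero_mul])] at h0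
  exact sub_eq_zero.mp h0
end

section
/- Let f₁ and f₂ be bivariate exponential polynomials, each with at most N terms, pairwise distinct frequencies in [0,1)², and nonzero polynomial coefficients of degree < D, and suppose f₁ ≠ f₂ as functions on ℝ² but f₁(m, n) = f₂(m, n) for all (m, n) ∈ A_{2N}(D). Let X be the union of the projections of the frequency sets of f₁ and f₂ onto the first coordinate. Then there are infinitely many distinct functions f : ℝ² → ℂ that are bivariate exponential polynomials with at most 2N terms, pairwise distinct frequencies in [0,1)² whose first coordinates all lie in X, polynomial coefficients of degree < D, and that satisfy f(m, n) = f₁(m, n) for all (m, n) ∈ A_{2N}(D). -/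
/-! The affine line `t ↦ (1 - t) f₁ + t f₂`, `t ∈ ℂ`, through the two given exponential
polynomials is injective because `f₁ ≠ f₂`. Each point of it is an exponential polynomial whose
frequencies lie in `V₁ ∪ V₂` (hence at most `2N` of them, with first coordinates in `X`), and it
agrees with `f₁` wherever `f₁` and `f₂` agree, in particular on `A_{2N}(D)`. -/

open MvPolynomial Finset

noncomputable def expPolySum (V : Finset (ℝ × ℝ)) (p : ℝ × ℝ → MvPolynomial (Fin 2) ℂ) :
    ℝ → ℝ → ℂ :=
  fun ξ η => ∑ v ∈ V, eval ![(ξ : ℂ), (η : ℂ)] (p v) *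
    Complex.exp (2 * Real.pi * Complex.I * (v.1 * ξ + v.2 * η))

theorem expPolySum_of_subset {V W : Finset (ℝ × ℝ)} {p : ℝ × ℝ → MvPolynomial (Fin 2) ℂ}
    (hVW : V ⊆ W) (hp : ∀ v ∈ W, v ∉ V → p v = 0) :
    expPolySum W p = expPolySum V p := by
  funext ξ η
  refine (sum_subset hVW fun v hvW hvV => ?_).symm
  simp [hp v hvW hvV]

theorem expPolySum_ite_mem {V W : Finset (ℝ × ℝ)} (p : ℝ × ℝ → MvPolynomial (Fin 2) ℂ)
    (hVW : V ⊆ W) :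
    expPolySum W (fun v => if v ∈ V then p v else 0) = expPolySum V p := by
  rw [expPolySum_of_subset hVW fun v _ hv => if_neg hv]
  funext ξ η
  exact sum_congr rfl fun v hv => by simp only [if_pos hv]

theorem expPolySum_C_mul_add_C_mul (V : Finset (ℝ × ℝ)) (p q : ℝ × ℝ → MvPolynomial (Fin 2) ℂ)
    (a b : ℂ) :
    expPolySum V (fun v => C a * p v + C b * q v) = a • expPolySum V p + b • expPolySum V q := by
  funext ξ η
  simp only [expPolySum, Pi.add_apply, Pi.smul_apply, smul_eq_mul, mul_sum, ← sum_add_distrib,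
    map_add, map_mul, eval_C]
  exact sum_congr rfl fun v _ => by ring

theorem degreeOf_ite_mem_lt {α σ R : Type*} [CommSemiring R] [DecidableEq α] {V : Finset α}
    {p : α → MvPolynomial σ R} {D : ℕ} (hD : 0 < D) (hp : ∀ v ∈ V, ∀ i, (p v).degreeOf i < D)
    (v : α) (i : σ) :
    (if v ∈ V then p v else 0).degreeOf i < D := by
  split_ifs with hv
  · exact hp v hv i
  · rwa [degreeOf_zero]

theorem eq_expPolySum_of_forall {f : ℝ → ℝ → ℂ} {V : Finset (ℝ × ℝ)}
    {p : ℝ × ℝ → MvPolynomial (Fin 2) ℂ}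
    (h : ∀ ξ η : ℝ, f ξ η = ∑ v ∈ V, eval ![(ξ : ℂ), (η : ℂ)] (p v) *
      Complex.exp (2 * Real.pi * Complex.I * (v.1 * ξ + v.2 * η))) :
    f = expPolySum V p :=
  funext fun ξ => funext (h ξ)

theorem IsExpPoly2.smul_add_smul {N M D : ℕ} {f g : ℝ → ℝ → ℂ} {V W : Finset (ℝ × ℝ)}
    (hf : IsExpPoly2 N D f V) (hg : IsExpPoly2 M D g W) (a b : ℂ) :
    ∃ U ⊆ V ∪ W, IsExpPoly2 (N + M) D (a • f + b • g) U := by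
  obtain ⟨p, hpcard, hpfreq, -, hpdeg, hpf⟩ := hf
  obtain ⟨q, hqcard, hqfreq, -, hqdeg, hqg⟩ := hg
  set r : ℝ × ℝ → MvPolynomial (Fin 2) ℂ := fun v =>
    C a * (if v ∈ V then p v else 0) + C b * (if v ∈ W then q v else 0)
  have hr : expPolySum (V ∪ W) r = a • f + b • g := by
    rw [expPolySum_C_mul_add_C_mul, expPolySum_ite_mem p subset_union_left,
      expPolySum_ite_mem q subset_union_right, eq_expPolySum_of_forall hpf,
      eq_expPolySum_of_forall hqg]
  refine ⟨(V ∪ W).filter (r · ≠ 0), filter_subset _ _, r, ?card, ?freq, ?nonzero, ?deg, ?sum⟩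
  case card =>
    calc _ ≤ (V ∪ W).card := card_filter_le _ _
      _ ≤ V.card + W.card := card_union_le _ _
      _ ≤ N + M := add_le_add hpcard hqcard
  case freq =>
    intro v hv
    rcases mem_union.mp (mem_filter.mp hv).1 with hvV | hvW
    exacts [hpfreq v hvV, hqfreq v hvW]
  case nonzero => exact fun v hv => (mem_filter.mp hv).2
  case deg =>
    intro v hv i
    have hD : 0 < D := by
      rcases mem_union.mp (mem_filter.mp hv).1 with hvV | hvW
      exacts [(hpdeg v hvV i).pos, (hqdeg v hvW i).pos]
    refine (degreeOf_add_le i _ _).trans_lt (max_lt ?_ ?_)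
    · exact (degreeOf_C_mul_le _ i a).trans_lt (degreeOf_ite_mem_lt hD hpdeg v i)
    · exact (degreeOf_C_mul_le _ i b).trans_lt (degreeOf_ite_mem_lt hD hqdeg v i)
  case sum =>
    have hfilter : expPolySum ((V ∪ W).filter (r · ≠ 0)) r = expPolySum (V ∪ W) r :=
      (expPolySum_of_subset (filter_subset _ _) fun v hv hvU => not_not.mp
        fun hrv => hvU (mem_filter.mpr ⟨hv, hrv⟩)).symm
    exact fun ξ η => congrFun (congrFun (hfilter.trans hr).symm ξ) η

theorem exp_poly_infinitely_many_from_two_general (N D : ℕ)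
    (f₁ f₂ : ℝ → ℝ → ℂ) (V₁ V₂ : Finset (ℝ × ℝ))
    (h₁ : IsExpPoly2 N D f₁ V₁) (h₂ : IsExpPoly2 N D f₂ V₂)
    (hne : f₁ ≠ f₂)
    (hsamp : ∀ mn ∈ sampSet (2 * N) D, f₁ (mn.1 : ℝ) (mn.2 : ℝ) = f₂ (mn.1 : ℝ) (mn.2 : ℝ)) :
    {f : ℝ → ℝ → ℂ | ∃ V : Finset (ℝ × ℝ), IsExpPoly2 (2 * N) D f V ∧
      (∀ v ∈ V, v.1 ∈ Prod.fst '' (V₁ : Set (ℝ × ℝ)) ∪ Prod.fst '' (V₂ : Set (ℝ × ℝ))) ∧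
      ∀ mn ∈ sampSet (2 * N) D,
        f (mn.1 : ℝ) (mn.2 : ℝ) = f₁ (mn.1 : ℝ) (mn.2 : ℝ)}.Infinite := by
  refine Set.infinite_of_injective_forall_mem (AffineMap.lineMap_injective ℂ hne) fun t => ?_
  obtain ⟨U, hUV, hU⟩ := h₁.smul_add_smul h₂ (1 - t) t
  refine ⟨U, ?_, fun v hv => ?_, fun mn hmn => ?_⟩
  · rwa [AffineMap.lineMap_apply_module, two_mul]
  · rcases mem_union.mp (hUV hv) with hvV | hvW
    exacts [Or.inl ⟨v, hvV, rfl⟩, Or.inr ⟨v, hvW, rfl⟩]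
  · simp [AffineMap.lineMap_apply_module', hsamp mn hmn]

/-- If two *different* bivariate exponential polynomials, each with at most
`N` terms, pairwise distinct frequencies in `[0,1)²` and nonzero coefficients of degree `< D`,
agree on the sampling set `A_{2N}(D)`, then there are infinitely many distinct bivariate
exponential polynomials with at most `2N` terms, frequencies in `[0,1)²` whose first
coordinates lie in the union `X` of the projections of the two frequency sets, and
coefficients of degree `< D`, all agreeing with `f₁` on `A_{2N}(D)`. -/
theorem exp_poly_infinitely_many_from_two (N D : ℕ) (hN : 0 < N) (hD : 0 < D)
    (f₁ f₂ : ℝ → ℝ → ℂ) (V₁ V₂ : Finset (ℝ × ℝ))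
    (h₁ : IsExpPoly2 N D f₁ V₁) (h₂ : IsExpPoly2 N D f₂ V₂)
    (hne : f₁ ≠ f₂)
    (hsamp : ∀ mn ∈ sampSet (2 * N) D, f₁ (mn.1 : ℝ) (mn.2 : ℝ) = f₂ (mn.1 : ℝ) (mn.2 : ℝ)) :
    {f : ℝ → ℝ → ℂ | ∃ V : Finset (ℝ × ℝ), IsExpPoly2 (2 * N) D f V ∧
      (∀ v ∈ V, v.1 ∈ Prod.fst '' (V₁ : Set (ℝ × ℝ)) ∪ Prod.fst '' (V₂ : Set (ℝ × ℝ))) ∧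
      ∀ mn ∈ sampSet (2 * N) D,
        f (mn.1 : ℝ) (mn.2 : ℝ) = f₁ (mn.1 : ℝ) (mn.2 : ℝ)}.Infinite :=
  exp_poly_infinitely_many_from_two_general N D f₁ f₂ V₁ V₂ h₁ h₂ hne hsamp
end
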